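/- arXiv:1410.5607 — 4 statements merged into one kernel-verified Lean document; each statement's English description precedes it below -/
import Mathlib

section
/- Let m ≥ 2 and c be natural numbers, and let i, j be natural numbers with i + j < m^(c+1). Write a_k = i / m^k % m, b_k = j / m^k % m, and d_k = (i + j) / m^k % m for the base-m digits. Then there exists ε : ℕ → ℕ with ε 0 = 0, ε (c + 1) = 0, and ε k ≤ 1 for all k, such that for every k ≤ c, (a_k : ℤ) + b_k = (d_k : ℤ) + m * ε (k + 1) − ε k. (Consequently, the coefficientwise sum of the base polynomials of i and j equals one of the 2^c modified polynomials of i + j, where a modified polynomial is obtained from the base polynomial of i + j by, for some subset of positions k < c, adding m to the k-th coefficient and subtracting 1 from the (k+1)-st coefficient.) -/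
/-!
Put `ε k := (i % m ^ k + j % m ^ k) / m ^ k`, the carry into position `k` when adding `i` and `j`
in base `m`. Dividing `i + j = (i % n + j % n) + n * (i / n + j / n)` by `n = m ^ k` gives
`(i + j) / m ^ k = i / m ^ k + j / m ^ k + ε k`; peeling one base-`m` digit off each quotient
then yields `a_k + b_k + ε k = d_k + m * ε (k + 1)`. No carry enters position `0`, and none
leaves position `c` since `i + j < m ^ (c + 1)`.
-/

namespace Nat

def addCarry (m i j k : ℕ) : ℕ :=
  (i % m ^ k + j % m ^ k) / m ^ k

theorem add_div_eq_div_add_div_add (i j n : ℕ) :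
    (i + j) / n = i / n + j / n + (i % n + j % n) / n := by
  rcases n.eq_zero_or_pos with rfl | hn
  · simp
  have hsplit : i + j = (i % n + j % n) + n * (i / n + j / n) := by
    have := Nat.div_add_mod i n
    have := Nat.div_add_mod j n
    linarith
  rw [hsplit, Nat.add_mul_div_left _ _ hn]
  ring

theorem mod_add_mod_div_le_one (i j n : ℕ) : (i % n + j % n) / n ≤ 1 := by
  rcases n.eq_zero_or_pos with rfl | hn
  · simp
  have := Nat.mod_lt i hn
  have := Nat.mod_lt j hn
  exact Nat.lt_succ_iff.mp ((Nat.div_lt_iff_lt_mul hn).mpr (by omega))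

theorem div_pow_eq_mul_div_pow_succ_add (m n k : ℕ) :
    n / m ^ k = m * (n / m ^ (k + 1)) + n / m ^ k % m := by
  rw [pow_succ, ← Nat.div_div_eq_div_mul, Nat.div_add_mod]

theorem addCarry_zero (m i j : ℕ) : addCarry m i j 0 = 0 := by
  simp [addCarry, Nat.mod_one]

theorem addCarry_le_one (m i j k : ℕ) : addCarry m i j k ≤ 1 :=
  mod_add_mod_div_le_one i j (m ^ k)

theorem addCarry_eq_zero_of_add_lt {m i j k : ℕ} (h : i + j < m ^ k) : addCarry m i j k = 0 := by
  rw [addCarry, Nat.mod_eq_of_lt (by omega : i < m ^ k), Nat.mod_eq_of_lt (by omega : j < m ^ k)]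
  exact Nat.div_eq_of_lt h

theorem add_div_pow_eq (m i j k : ℕ) :
    (i + j) / m ^ k = i / m ^ k + j / m ^ k + addCarry m i j k :=
  add_div_eq_div_add_div_add i j (m ^ k)

theorem digit_add_digit_add_addCarry (m i j k : ℕ) :
    i / m ^ k % m + j / m ^ k % m + addCarry m i j k
      = (i + j) / m ^ k % m + m * addCarry m i j (k + 1) := by
  have hk := add_div_pow_eq m i j k
  have hk1 := add_div_pow_eq m i j (k + 1)
  rw [div_pow_eq_mul_div_pow_succ_add m i k, div_pow_eq_mul_div_pow_succ_add m j k,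
    div_pow_eq_mul_div_pow_succ_add m (i + j) k, hk1] at hk
  linarith

end Nat

theorem digits_sum_modified_general (m c : ℕ) (i j : ℕ)
    (hij : i + j < m ^ (c + 1)) :
    ∃ ε : ℕ → ℕ, ε 0 = 0 ∧ ε (c + 1) = 0 ∧ (∀ k, ε k ≤ 1) ∧
      ∀ k ≤ c, ((i / m ^ k % m : ℕ) : ℤ) + ((j / m ^ k % m : ℕ) : ℤ)
        = ((i + j) / m ^ k % m : ℕ) + (m : ℤ) * ε (k + 1) - ε k := by
  refine ⟨Nat.addCarry m i j, Nat.addCarry_zero m i j, Nat.addCarry_eq_zero_of_add_lt hij,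
    Nat.addCarry_le_one m i j, fun k _ => ?_⟩
  rw [eq_sub_iff_add_eq]
  exact_mod_cast Nat.digit_add_digit_add_addCarry m i j k

/-- The coefficientwise sum of the base-`m` digit vectors of `i` and `j` equals the
digit vector of `i + j` adjusted by carries `ε k ∈ {0,1}` with no carry in or out:
`a_k + b_k = d_k + m·ε (k+1) − ε k` for all `k ≤ c`. -/
theorem digits_sum_modified (m c : ℕ) (hm : 2 ≤ m) (i j : ℕ)
    (hij : i + j < m ^ (c + 1)) :
    ∃ ε : ℕ → ℕ, ε 0 = 0 ∧ ε (c + 1) = 0 ∧ (∀ k, ε k ≤ 1) ∧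
      ∀ k ≤ c, ((i / m ^ k % m : ℕ) : ℤ) + ((j / m ^ k % m : ℕ) : ℤ)
        = ((i + j) / m ^ k % m : ℕ) + (m : ℤ) * ε (k + 1) - ε k :=
  digits_sum_modified_general m c i j hij
end

section
/- Let R and C be finite types with R nonempty, and let M : R → C → Prop be a decidable relation such that for every y : C, 2 * (Finset.univ.filter (fun x => M x y)).card ≥ Fintype.card R. Then there exists a finset S of R with S.card ≤ Nat.log 2 (Fintype.card C) + 1 such that for every y : C there exists x ∈ S with M x y. (Greedily choosing a row covering at least half of the remaining columns and recursing yields a cover of all columns by at most log₂|C| + 1 rows.) -/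
open Finset

lemma greedy_cover {R C : Type*} [Fintype R] [Fintype C] [Nonempty R]
    (M : R → C → Prop) [∀ x y, Decidable (M x y)]
    (h : ∀ y : C, 2 * (Finset.univ.filter (fun x => M x y)).card ≥ Fintype.card R) :
    ∀ n (T : Finset C), T.card ≤ n →
      ∃ S : Finset R, S.card ≤ Nat.log 2 T.card + 1 ∧ ∀ y ∈ T, ∃ x ∈ S, M x y := by
  classical
  intro n
  induction n with
  | zero =>
    intro T hT
    exact ⟨∅, by simp, fun y hy => by simp_all [card_eq_zero.mp (Nat.le_zero.mp hT)]⟩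
  | succ n ih =>
    intro T hT
    rcases T.eq_empty_or_nonempty with rfl | hTne
    · exact ⟨∅, by simp, fun y hy => by simp at hy⟩
    -- double counting
    have hsum : ∑ y ∈ T, (Finset.univ.filter (fun x => M x y)).card
        = ∑ x : R, (T.filter (fun y => M x y)).card := by
      simp_rw [Finset.card_filter]
      exact Finset.sum_comm
    have hbig : T.card * Fintype.card R ≤ 2 * ∑ x : R, (T.filter (fun y => M x y)).card := by
      rw [← hsum, Finset.mul_sum]
      calc T.card * Fintype.card R = ∑ _y ∈ T, Fintype.card R := by
            rw [Finset.sum_const, smul_eq_mul]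
        _ ≤ ∑ y ∈ T, 2 * (Finset.univ.filter (fun x => M x y)).card :=
            Finset.sum_le_sum fun y _ => h y
    have hx : ∃ x : R, T.card ≤ 2 * (T.filter (fun y => M x y)).card := by
      by_contra hc
      push_neg at hc
      have hlt : ∑ x : R, 2 * (T.filter (fun y => M x y)).card
          < ∑ _x : R, T.card :=
        Finset.sum_lt_sum_of_nonempty Finset.univ_nonempty fun x _ => hc x
      rw [Finset.sum_const, smul_eq_mul, ← Finset.mul_sum, Finset.card_univ] at hlt
      have hcomm : Fintype.card R * T.card = T.card * Fintype.card R := Nat.mul_comm _ _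
      omega
    obtain ⟨x, hx⟩ := hx
    set T' := T.filter (fun y => ¬ M x y) with hT'
    have hsplit : (T.filter (fun y => M x y)).card + T'.card = T.card :=
      Finset.card_filter_add_card_filter_not _
    have hcovpos : 1 ≤ (T.filter (fun y => M x y)).card := by
      have := hTne.card_pos
      omega
    have hT'le : 2 * T'.card ≤ T.card := by omega
    have hT'lt : T'.card < T.card := by omega
    rcases Nat.eq_zero_or_pos T'.card with h0 | hpos
    · refine ⟨{x}, by simp, fun y hy => ⟨x, Finset.mem_singleton_self x, ?_⟩⟩
      by_contra hM
      have : y ∈ T' := Finset.mem_filter.mpr ⟨hy, hM⟩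
      simp [Finset.card_eq_zero.mp h0] at this
    obtain ⟨S', hS'card, hS'cov⟩ := ih T' (by omega)
    refine ⟨insert x S', ?_, ?_⟩
    · have hlog : Nat.log 2 T'.card + 1 ≤ Nat.log 2 T.card := by
        have h1 : Nat.log 2 (T'.card * 2) = Nat.log 2 T'.card + 1 :=
          Nat.log_mul_base (by norm_num) (by omega)
        have h2 : Nat.log 2 (T'.card * 2) ≤ Nat.log 2 T.card :=
          Nat.log_mono_right (by omega)
        omega
      calc (insert x S').card ≤ S'.card + 1 := Finset.card_insert_le _ _
        _ ≤ Nat.log 2 T.card + 1 := by omega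
    · intro y hy
      by_cases hM : M x y
      · exact ⟨x, Finset.mem_insert_self _ _, hM⟩
      · obtain ⟨z, hz, hMz⟩ := hS'cov y (Finset.mem_filter.mpr ⟨hy, hM⟩)
        exact ⟨z, Finset.mem_insert_of_mem hz, hMz⟩

/-- If every column of a 0–1 table has ones in at least half of the rows, then there is
a set of at most `log₂ |C| + 1` rows covering all columns. -/
theorem exists_small_row_cover (R C : Type*) [Fintype R] [Fintype C] [Nonempty R]
    (M : R → C → Prop) [∀ x y, Decidable (M x y)]
    (h : ∀ y : C, 2 * (Finset.univ.filter (fun x => M x y)).card ≥ Fintype.card R) :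
    ∃ S : Finset R, S.card ≤ Nat.log 2 (Fintype.card C) + 1 ∧
      ∀ y : C, ∃ x ∈ S, M x y := by
  obtain ⟨S, hcard, hcov⟩ := greedy_cover M h (Finset.univ : Finset C).card Finset.univ le_rfl
  refine ⟨S, ?_, fun y => hcov y (Finset.mem_univ y)⟩
  rwa [Finset.card_univ] at hcard
end

section
/- Let F be a finite field, c a natural number, and S a finset of polynomials in F[X] such that every p ∈ S has natDegree p ≤ c, with S.card = s. Assume 2 * c * (s − 1) ≤ Fintype.card F. Then there exists a finset E of F with E.card ≤ Nat.log 2 s + 1 such that for every p ∈ S there exists x ∈ E with p'.eval x ≠ p.eval x for all p' ∈ S with p' ≠ p. (There is a set of at most log₂ s + 1 assignment values under which every encoding polynomial appears as a singleton at least once.) -/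
open Polynomial Finset

attribute [local instance] Classical.propDecidable

lemma root_count_aux {F : Type*} [Field F] [Fintype F] {c : ℕ} {p q : F[X]}
    (hp : p.natDegree ≤ c) (hq : q.natDegree ≤ c) (hne : q ≠ p) :
    (Finset.univ.filter (fun x => q.eval x = p.eval x)).card ≤ c := by
  have h : q - p ≠ 0 := sub_ne_zero.mpr hne
  calc (Finset.univ.filter (fun x => q.eval x = p.eval x)).card
      ≤ (q - p).roots.toFinset.card := by
        apply Finset.card_le_card
        intro x hx
        simp only [Finset.mem_filter] at hx
        rw [Multiset.mem_toFinset, mem_roots h]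
        simp [IsRoot, sub_eq_zero, hx.2]
    _ ≤ Multiset.card (q - p).roots := Multiset.toFinset_card_le _
    _ ≤ (q - p).natDegree := Polynomial.card_roots' _
    _ ≤ c := le_trans (Polynomial.natDegree_sub_le _ _) (max_le hq hp)

/-- good assignment exists: at most half of `T` collides. -/
lemma exists_good_x {F : Type*} [Field F] [Fintype F]
    (c : ℕ) (S : Finset F[X]) (hdeg : ∀ p ∈ S, p.natDegree ≤ c)
    (s : ℕ) (hs : S.card = s) (hcard : 2 * c * (s - 1) ≤ Fintype.card F)
    (T : Finset F[X]) (hT : T ⊆ S) :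
    ∃ x : F, 2 * (T.filter (fun p => ∃ q ∈ S, q ≠ p ∧ q.eval x = p.eval x)).card ≤ T.card := by
  set Bad : F → Finset F[X] := fun x => T.filter (fun p => ∃ q ∈ S, q ≠ p ∧ q.eval x = p.eval x)
  have key : ∀ x, (Bad x).card ≤ ∑ p ∈ T, ((S.filter (fun q => q ≠ p)).filter
      (fun q => q.eval x = p.eval x)).card := by
    intro x
    rw [Finset.card_filter]
    apply Finset.sum_le_sum
    intro p hp
    split_ifs with h
    · obtain ⟨q, hqS, hqne, hqe⟩ := h
      apply Finset.card_pos.mpr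
      exact ⟨q, by simp [hqS, hqne, hqe]⟩
    · exact Nat.zero_le _
  have inner : ∀ p ∈ T, ∑ x : F, ((S.filter (fun q => q ≠ p)).filter
      (fun q => q.eval x = p.eval x)).card ≤ (s - 1) * c := by
    intro p hp
    have hswap : ∑ x : F, ((S.filter (fun q => q ≠ p)).filter
        (fun q => q.eval x = p.eval x)).card
        = ∑ q ∈ S.filter (fun q => q ≠ p),
            (Finset.univ.filter (fun x => q.eval x = p.eval x)).card := by
      simp_rw [Finset.card_filter]
      exact Finset.sum_comm
    rw [hswap]
    have hcard1 : (S.filter (fun q => q ≠ p)).card = s - 1 := by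
      rw [Finset.filter_ne', Finset.card_erase_of_mem (hT hp), hs]
    calc ∑ q ∈ S.filter (fun q => q ≠ p),
          (Finset.univ.filter (fun x => q.eval x = p.eval x)).card
        ≤ ∑ q ∈ S.filter (fun q => q ≠ p), c := by
          apply Finset.sum_le_sum
          intro q hq
          rw [Finset.mem_filter] at hq
          exact root_count_aux (hdeg p (hT hp)) (hdeg q hq.1) hq.2
      _ = (s - 1) * c := by rw [Finset.sum_const, smul_eq_mul, hcard1]
  have total : ∑ x : F, 2 * (Bad x).card ≤ ∑ x : F, T.card := by
    calc ∑ x : F, 2 * (Bad x).card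
        ≤ ∑ x : F, 2 * ∑ p ∈ T, ((S.filter (fun q => q ≠ p)).filter
            (fun q => q.eval x = p.eval x)).card :=
          Finset.sum_le_sum (fun x _ => Nat.mul_le_mul_left 2 (key x))
      _ = 2 * ∑ p ∈ T, ∑ x : F, ((S.filter (fun q => q ≠ p)).filter
            (fun q => q.eval x = p.eval x)).card := by
          rw [← Finset.mul_sum, Finset.sum_comm]
      _ ≤ 2 * ∑ p ∈ T, (s - 1) * c := by
          exact Nat.mul_le_mul_left 2 (Finset.sum_le_sum inner)
      _ = T.card * (2 * c * (s - 1)) := by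
          rw [Finset.sum_const, smul_eq_mul]; ring
      _ ≤ T.card * Fintype.card F := Nat.mul_le_mul_left _ hcard
      _ = ∑ _x : F, T.card := by rw [Finset.sum_const, smul_eq_mul, Finset.card_univ, mul_comm]
  obtain ⟨x, _, hx⟩ := Finset.exists_le_of_sum_le Finset.univ_nonempty total
  exact ⟨x, hx⟩

lemma main_induction {F : Type*} [Field F] [Fintype F]
    (c : ℕ) (S : Finset F[X]) (hdeg : ∀ p ∈ S, p.natDegree ≤ c)
    (s : ℕ) (hs : S.card = s) (hcard : 2 * c * (s - 1) ≤ Fintype.card F) :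
    ∀ n : ℕ, ∀ T : Finset F[X], T ⊆ S → T.card < 2 ^ (n + 1) →
      ∃ E : Finset F, E.card ≤ n + 1 ∧
        ∀ p ∈ T, ∃ x ∈ E, ∀ p' ∈ S, p' ≠ p → p'.eval x ≠ p.eval x := by
  intro n
  induction n with
  | zero =>
    intro T hT hTcard
    obtain ⟨x, hx⟩ := exists_good_x c S hdeg s hs hcard T hT
    have hbad : (T.filter (fun p => ∃ q ∈ S, q ≠ p ∧ q.eval x = p.eval x)).card = 0 := by
      omega
    rw [Finset.card_eq_zero] at hbad
    refine ⟨{x}, by simp, fun p hp => ⟨x, Finset.mem_singleton_self x, ?_⟩⟩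
    intro p' hp' hne heq
    have : p ∈ T.filter (fun p => ∃ q ∈ S, q ≠ p ∧ q.eval x = p.eval x) := by
      simp only [Finset.mem_filter]
      exact ⟨hp, p', hp', hne, heq⟩
    rw [hbad] at this
    exact absurd this (Finset.notMem_empty _)
  | succ n ih =>
    intro T hT hTcard
    obtain ⟨x, hx⟩ := exists_good_x c S hdeg s hs hcard T hT
    set T' := T.filter (fun p => ∃ q ∈ S, q ≠ p ∧ q.eval x = p.eval x) with hT'def
    have hT'sub : T' ⊆ S := (Finset.filter_subset _ _).trans hT
    have hT'card : T'.card < 2 ^ (n + 1) := by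
      have := Finset.card_filter_le T (fun p => ∃ q ∈ S, q ≠ p ∧ q.eval x = p.eval x)
      have h2 : 2 ^ (n + 1 + 1) = 2 * 2 ^ (n + 1) := by ring
      omega
    obtain ⟨E', hE'card, hE'⟩ := ih T' hT'sub hT'card
    refine ⟨insert x E', ?_, ?_⟩
    · calc (insert x E').card ≤ E'.card + 1 := Finset.card_insert_le _ _
        _ ≤ n + 1 + 1 := by omega
    · intro p hp
      by_cases hpb : p ∈ T'
      · obtain ⟨y, hy, hgood⟩ := hE' p hpb
        exact ⟨y, Finset.mem_insert_of_mem hy, hgood⟩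
      · refine ⟨x, Finset.mem_insert_self _ _, ?_⟩
        intro p' hp' hne heq
        exact hpb (Finset.mem_filter.mpr ⟨hp, p', hp', hne, heq⟩)

/-- There is a set of at most `log₂ s + 1` assignment values under which every encoding
polynomial appears as a singleton at least once. -/
theorem exists_singleton_assignments {F : Type*} [Field F] [Fintype F]
    (c : ℕ) (S : Finset F[X]) (hdeg : ∀ p ∈ S, p.natDegree ≤ c)
    (s : ℕ) (hs : S.card = s) (hcard : 2 * c * (s - 1) ≤ Fintype.card F) :
    ∃ E : Finset F, E.card ≤ Nat.log 2 s + 1 ∧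
      ∀ p ∈ S, ∃ x ∈ E, ∀ p' ∈ S, p' ≠ p → p'.eval x ≠ p.eval x := by
  have := main_induction c S hdeg s hs hcard (Nat.log 2 s) S (le_refl S) ?_
  · exact this
  · rw [hs]; exact Nat.lt_pow_succ_log_self one_lt_two s
end

section
/- Let m ≥ 1 and c be natural numbers, let q = 2 * m + 1, and let d, d' : Fin (c + 1) → ℤ be coefficient vectors with −1 ≤ d k ≤ 2 * m − 1 and −1 ≤ d' k ≤ 2 * m − 1 for all k. If ∑_{k} d k * m^k ≠ ∑_{k} d' k * m^k (as integers), then the polynomials ∑_{k} C ((d k : ZMod q)) * X^k and ∑_{k} C ((d' k : ZMod q)) * X^k in (ZMod q)[X] are distinct. (Modified polynomials arising from distinct indices are distinct polynomials over ZMod q.) -/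
open Polynomial

/-- Modified polynomials arising from distinct indices are distinct polynomials over
`ZMod q`, where `q = 2m + 1` and the integer coefficients lie in `[−1, 2m − 1]`. -/
theorem modified_polynomials_distinct (m c : ℕ) (hm : 1 ≤ m)
    (d d' : Fin (c + 1) → ℤ)
    (hd : ∀ k, -1 ≤ d k ∧ d k ≤ 2 * (m : ℤ) - 1)
    (hd' : ∀ k, -1 ≤ d' k ∧ d' k ≤ 2 * (m : ℤ) - 1)
    (hne : ∑ k, d k * (m : ℤ) ^ (k : ℕ) ≠ ∑ k, d' k * (m : ℤ) ^ (k : ℕ)) :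
    (∑ k, C ((d k : ZMod (2 * m + 1))) * X ^ (k : ℕ))
      ≠ ∑ k, C ((d' k : ZMod (2 * m + 1))) * X ^ (k : ℕ) := by
  intro h
  apply hne
  apply Finset.sum_congr rfl
  intro k _
  have hk : ((d k : ZMod (2*m+1)) = (d' k : ZMod (2*m+1))) := by
    have h2 := congrArg (fun p => Polynomial.coeff p (k : ℕ)) h
    simpa [Polynomial.finset_sum_coeff, Polynomial.coeff_C_mul, Polynomial.coeff_X_pow,
      Fin.val_eq_val, Finset.sum_ite_eq'] using h2
  have hdvd : ((2*m+1 : ℕ) : ℤ) ∣ d' k - d k :=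
    ((ZMod.intCast_eq_intCast_iff _ _ _).mp (by exact_mod_cast hk)).dvd
  have h0 : d' k - d k = 0 := by
    apply Int.eq_zero_of_abs_lt_dvd hdvd
    have h1 := hd k
    have h2 := hd' k
    have : |d' k - d k| ≤ 2 * (m : ℤ) := by
      rw [abs_le]; omega
    push_cast
    omega
  have : d k = d' k := by omega
  rw [this]
end
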